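/- arXiv:2008.01489 — 2 statements merged into one kernel-verified Lean document; each statement's English description precedes it below -/
import Mathlib

section
/- (Remark 3.8.) Let g(x) = x·e^{−x}/(1+e^{−x})² for x ≥ 0. Then g(x) < 1/4 for all x ≥ 0. Moreover, for f = f_LogP one has |x − x*|·f'(x) = g(θ|x − x*|) for all x ∈ [0,1]; consequently, if min{x*, 1−x*} ≥ (1−α−β)/(4(1−α)), then max{f'(0), f'(1)} < (1−α)/(1−α−β). -/
/-!
Writing `e^{-u}/(1+e^{-u})² = 1/(4 cosh²(u/2))`, both `f_LogP'` and `g` are expressed through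
the even function `cosh`: `g(x) = x/(4 cosh²(x/2))` and `f_LogP'(x) = θ/(4 cosh²(θ(x−x*)/2))`,
whence `|x − x*| f_LogP'(x) = g(θ|x − x*|)`. The bound `g < 1/4` is `2t < cosh² t = 1 + sinh² t`,
which holds since `1 + s² ≥ 2s` and `sinh t > t` for `t > 0`. At `x ∈ {0, 1}` the distance
`|x − x*|` is at least `min{x*, 1 − x*}`, and `|x − x*| f_LogP'(x) < 1/4` gives the last claim.
-/

noncomputable section

/-- The Logit Probability function `f_LogP(x) = 1/(1+exp(−θ(x−x*)))`. -/
def fLogP (θ xs x : ℝ) : ℝ := 1 / (1 + Real.exp (-θ * (x - xs)))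

/-- The derivative of `f_LogP`. -/
def fLogP' (θ xs x : ℝ) : ℝ :=
  θ * Real.exp (-θ * (x - xs)) / (1 + Real.exp (-θ * (x - xs))) ^ 2

/-- The auxiliary function `g(x) = x·e^{−x}/(1+e^{−x})²`. -/
def gAux (x : ℝ) : ℝ := x * Real.exp (-x) / (1 + Real.exp (-x)) ^ 2

open Real

theorem hasDerivAt_fLogP (θ xs x : ℝ) : HasDerivAt (fLogP θ xs) (fLogP' θ xs x) x := by
  have hlin : HasDerivAt (fun x : ℝ => -θ * (x - xs)) (-θ) x := by
    simpa using ((hasDerivAt_id x).sub_const xs).const_mul (-θ)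
  have hden : 1 + exp (-θ * (x - xs)) ≠ 0 := by positivity
  refine ((hasDerivAt_const x (1 : ℝ)).div (hlin.exp.const_add 1) hden).congr_deriv ?_
  rw [fLogP']
  field_simp
  ring

theorem exp_neg_div_one_add_exp_neg_sq (u : ℝ) :
    exp (-u) / (1 + exp (-u)) ^ 2 = 1 / (4 * cosh (u / 2) ^ 2) := by
  have hsq : exp (-u) = exp (-(u / 2)) ^ 2 := by rw [← exp_nat_mul]; ring_nf
  have hone : exp (u / 2) * exp (-(u / 2)) = 1 := by rw [← exp_add, add_neg_cancel, exp_zero]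
  have hfac : 1 + exp (-u) = exp (-(u / 2)) * (2 * cosh (u / 2)) := by
    rw [cosh_eq, hsq]; linear_combination -hone
  rw [hfac, hsq]
  have : exp (-(u / 2)) ≠ 0 := (exp_pos _).ne'
  have : cosh (u / 2) ≠ 0 := (cosh_pos _).ne'
  field_simp
  ring

theorem gAux_eq (x : ℝ) : gAux x = x / (4 * cosh (x / 2) ^ 2) := by
  rw [gAux, mul_div_assoc, exp_neg_div_one_add_exp_neg_sq, mul_one_div]

theorem fLogP'_eq (θ xs x : ℝ) : fLogP' θ xs x = θ / (4 * cosh (θ * (x - xs) / 2) ^ 2) := by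
  rw [fLogP', neg_mul, mul_div_assoc, exp_neg_div_one_add_exp_neg_sq, mul_one_div]

theorem two_mul_lt_cosh_sq (t : ℝ) : 2 * t < cosh t ^ 2 := by
  rcases le_or_gt t 0 with ht | ht
  · nlinarith [one_le_cosh t]
  · nlinarith [self_lt_sinh_iff.2 ht, sq_nonneg (sinh t - 1), cosh_sq' t]

theorem gAux_lt_one_quarter (x : ℝ) : gAux x < 1 / 4 := by
  rw [gAux_eq, div_lt_iff₀ (by positivity)]
  linarith [two_mul_lt_cosh_sq (x / 2)]

theorem abs_sub_mul_fLogP' {θ : ℝ} (hθ : 0 ≤ θ) (xs x : ℝ) :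
    |x - xs| * fLogP' θ xs x = gAux (θ * |x - xs|) := by
  have hcosh : cosh (θ * (x - xs) / 2) = cosh (θ * |x - xs| / 2) := by
    rw [← cosh_abs, abs_div, abs_mul, abs_of_nonneg hθ, abs_two]
  rw [fLogP'_eq, gAux_eq, hcosh]
  ring

theorem fLogP'_lt_of_div_le_abs_sub {θ xs x a b : ℝ} (hθ : 0 ≤ θ) (ha : 0 < a) (hb : 0 < b)
    (h : a / (4 * b) ≤ |x - xs|) : fLogP' θ xs x < b / a := by
  have hpos : 0 < |x - xs| := lt_of_lt_of_le (by positivity) h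
  have hprod : |x - xs| * fLogP' θ xs x < 1 / 4 := by
    rw [abs_sub_mul_fLogP' hθ]
    exact gAux_lt_one_quarter _
  calc fLogP' θ xs x < 1 / (4 * |x - xs|) := by
        rw [lt_div_iff₀ (by positivity)]
        linarith
    _ ≤ 1 / (4 * (a / (4 * b))) := by gcongr
    _ = b / a := by field_simp

theorem stmt11_general (α β : ℝ)
    (hα : α ∈ Set.Ico (0 : ℝ) 1)
    (hαβ : α + β ∈ Set.Ioo (0 : ℝ) 1)
    (θ xs : ℝ) (hθ : 0 < θ) :
    (∀ x : ℝ, HasDerivAt (fLogP θ xs) (fLogP' θ xs x) x) ∧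
    (∀ x : ℝ, 0 ≤ x → gAux x < 1 / 4) ∧
    (∀ x ∈ Set.Icc (0 : ℝ) 1, |x - xs| * fLogP' θ xs x = gAux (θ * |x - xs|)) ∧
    ((1 - α - β) / (4 * (1 - α)) ≤ min xs (1 - xs) →
      max (fLogP' θ xs 0) (fLogP' θ xs 1) < (1 - α) / (1 - α - β)) := by
  refine ⟨hasDerivAt_fLogP θ xs, fun x _ => gAux_lt_one_quarter x,
    fun x _ => abs_sub_mul_fLogP' hθ.le xs x, fun hmin => ?_⟩
  have hnum : 0 < 1 - α - β := by linarith [hαβ.2]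
  have hden : 0 < 1 - α := by linarith [hα.2]
  refine max_lt (fLogP'_lt_of_div_le_abs_sub hθ.le hnum hden ?_)
    (fLogP'_lt_of_div_le_abs_sub hθ.le hnum hden ?_)
  · calc _ ≤ xs := hmin.trans (min_le_left _ _)
      _ ≤ |0 - xs| := by rw [zero_sub, abs_neg]; exact le_abs_self xs
  · exact hmin.trans ((min_le_right _ _).trans (le_abs_self _))

/-- Remark 3.8: `g < 1/4` on `[0,∞)`, `|x−x*|·f'(x) = g(θ|x−x*|)` for
`f = f_LogP`, and consequently if `min{x*,1−x*} ≥ (1−α−β)/(4(1−α))`, then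
`max{f'(0), f'(1)} < (1−α)/(1−α−β)`. -/
theorem stmt11 (α β : ℝ)
    (hα : α ∈ Set.Ico (0 : ℝ) 1) (hβ : β ∈ Set.Ico (0 : ℝ) 1)
    (hαβ : α + β ∈ Set.Ioo (0 : ℝ) 1)
    (θ xs : ℝ) (hθ : 0 < θ) (hxs : xs ∈ Set.Ioo (0 : ℝ) 1) :
    (∀ x : ℝ, HasDerivAt (fLogP θ xs) (fLogP' θ xs x) x) ∧
    (∀ x : ℝ, 0 ≤ x → gAux x < 1 / 4) ∧
    (∀ x ∈ Set.Icc (0 : ℝ) 1, |x - xs| * fLogP' θ xs x = gAux (θ * |x - xs|)) ∧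
    ((1 - α - β) / (4 * (1 - α)) ≤ min xs (1 - xs) →
      max (fLogP' θ xs 0) (fLogP' θ xs 1) < (1 - α) / (1 - α - β)) :=
  stmt11_general α β hα hαβ θ xs hθ

end
end

section
/- (Deterministic core of Theorem 3.3 under condition S1, case f = f_LogP.) Let f = f_LogP and assume θ/4 ≤ 1/(1−α−β). Then for every constant c ∈ (−(α+β)/(1−α−β), 0) the function φ̃_c(x) = f(x) − x/(1−α−β) − c has exactly one zero in [0,1]; consequently every point of Z(F) is a synchronization point. -/
noncomputable section

/-- The drift field of the interacting system. -/
def Fmap (N : ℕ) (α β q : ℝ) (f : ℝ → ℝ) (z : Fin N → ℝ) : Fin N → ℝ :=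
  fun h => α * ((N : ℝ)⁻¹ * ∑ i, z i) + β * q + (1 - α - β) * f (z h) - z h

/-- The zero set of `Fmap` inside the cube `[0,1]^N`. -/
def ZeroSet (N : ℕ) (α β q : ℝ) (f : ℝ → ℝ) : Set (Fin N → ℝ) :=
  {z | (∀ h, z h ∈ Set.Icc (0 : ℝ) 1) ∧ Fmap N α β q f z = 0}

/-!
With `s = 1 - α - β`, a zero `z` of `F` satisfies `f (z h) - z h / s = -(α z̄ + β q) / s` for
every coordinate `h`, so the map `g x = f x - x / s` takes the same value at all coordinates.
Since `f'(x) = θ e / (1 + e)²` with `e = exp (-θ (x - x*))`, AM-GM gives `f' < θ / 4 ≤ 1 / s`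
away from `x*`; hence `g` is strictly decreasing, so it is injective (all coordinates agree) and,
by the intermediate value theorem, takes each value between `g 1 < c < g 0` exactly once.
-/

open Set Function

lemma strictAnti_of_hasDerivAt_neg_of_ne {f f' : ℝ → ℝ} {a : ℝ}
    (hf : ∀ x, HasDerivAt f (f' x) x) (hf' : ∀ x ≠ a, f' x < 0) : StrictAnti f := by
  have hcont : Continuous f := continuous_iff_continuousAt.2 fun x => (hf x).continuousAt
  refine StrictAntiOn.Iic_union_Ici (a := a) ?_ ?_
  · refine strictAntiOn_of_hasDerivWithinAt_neg (convex_Iic a) hcont.continuousOn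
      (fun x _ => (hf x).hasDerivWithinAt) fun x hx => hf' x ?_
    rw [interior_Iic] at hx
    exact hx.ne
  · refine strictAntiOn_of_hasDerivWithinAt_neg (convex_Ici a) hcont.continuousOn
      (fun x _ => (hf x).hasDerivWithinAt) fun x hx => hf' x ?_
    rw [interior_Ici] at hx
    exact hx.ne'

lemma StrictAnti.existsUnique_mem_Icc_eq {g : ℝ → ℝ} (hg : StrictAnti g) (hcont : Continuous g)
    {a b c : ℝ} (hab : a ≤ b) (hc : c ∈ Icc (g b) (g a)) : ∃! x, x ∈ Icc a b ∧ g x = c := by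
  obtain ⟨x, hx, hgx⟩ := intermediate_value_Icc' hab hcont.continuousOn hc
  exact ⟨x, ⟨hx, hgx⟩, fun y hy => hg.injective (hy.2.trans hgx.symm)⟩

lemma mul_div_one_add_sq_lt_div_four {θ e : ℝ} (hθ : 0 < θ) (he : 0 < e) (he₁ : e ≠ 1) :
    θ * e / (1 + e) ^ 2 < θ / 4 := by
  have hsq : 0 < (1 - e) ^ 2 := sq_pos_of_ne_zero (sub_ne_zero.2 he₁.symm)
  rw [div_lt_div_iff₀ (by positivity) (by norm_num)]
  nlinarith

lemma fLogP_pos (θ xs x : ℝ) : 0 < fLogP θ xs x := by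
  unfold fLogP
  positivity

lemma fLogP_lt_one (θ xs x : ℝ) : fLogP θ xs x < 1 := by
  unfold fLogP
  rw [div_lt_one (by positivity)]
  linarith [Real.exp_pos (-θ * (x - xs))]

lemma fLogP_hasDerivAt (θ xs x : ℝ) :
    HasDerivAt (fLogP θ xs)
      (θ * Real.exp (-θ * (x - xs)) / (1 + Real.exp (-θ * (x - xs))) ^ 2) x := by
  have hlin : HasDerivAt (fun y : ℝ => -θ * (y - xs)) (-θ) x := by
    simpa using ((hasDerivAt_id x).sub_const xs).const_mul (-θ)
  have hden := (hlin.exp.const_add 1).inv (by positivity : 1 + Real.exp (-θ * (x - xs)) ≠ 0)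
  have hf : fLogP θ xs = fun y => (1 + Real.exp (-θ * (y - xs)))⁻¹ :=
    funext fun _ => one_div _
  rw [hf]
  exact hden.congr_deriv (by ring)

lemma fLogP_deriv_lt (θ xs : ℝ) {x : ℝ} (hθ : 0 < θ) (hx : x ≠ xs) :
    θ * Real.exp (-θ * (x - xs)) / (1 + Real.exp (-θ * (x - xs))) ^ 2 < θ / 4 := by
  refine mul_div_one_add_sq_lt_div_four hθ (Real.exp_pos _) fun h => hx ?_
  rw [Real.exp_eq_one_iff, mul_eq_zero, sub_eq_zero] at h
  exact h.resolve_left (neg_ne_zero.2 hθ.ne')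

lemma fLogP_sub_div_hasDerivAt (θ xs s x : ℝ) :
    HasDerivAt (fun x => fLogP θ xs x - x / s)
      (θ * Real.exp (-θ * (x - xs)) / (1 + Real.exp (-θ * (x - xs))) ^ 2 - 1 / s) x :=
  (fLogP_hasDerivAt θ xs x).sub ((hasDerivAt_id x).div_const s)

lemma fLogP_sub_div_continuous (θ xs s : ℝ) : Continuous fun x => fLogP θ xs x - x / s :=
  continuous_iff_continuousAt.2 fun x => (fLogP_sub_div_hasDerivAt θ xs s x).continuousAt

lemma fLogP_sub_div_strictAnti {θ xs s : ℝ} (hθ : 0 < θ) (hslope : θ / 4 ≤ 1 / s) :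
    StrictAnti fun x => fLogP θ xs x - x / s :=
  strictAnti_of_hasDerivAt_neg_of_ne (a := xs) (fLogP_sub_div_hasDerivAt θ xs s) fun _ hx =>
    sub_neg.2 ((fLogP_deriv_lt θ xs hθ hx).trans_le hslope)

lemma sub_div_eq_of_mem_ZeroSet {N : ℕ} {α β q : ℝ} {f : ℝ → ℝ} {z : Fin N → ℝ}
    (hs : 1 - α - β ≠ 0) (hz : z ∈ ZeroSet N α β q f) (h : Fin N) :
    f (z h) - z h / (1 - α - β) = -(α * ((N : ℝ)⁻¹ * ∑ i, z i) + β * q) / (1 - α - β) := by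
  have hzero := congrFun hz.2 h
  simp only [Fmap, Pi.zero_apply] at hzero
  rw [eq_div_iff hs, sub_mul, div_mul_cancel₀ _ hs]
  linarith

lemma apply_eq_of_mem_ZeroSet {N : ℕ} {α β q : ℝ} {f : ℝ → ℝ} {z : Fin N → ℝ}
    (hs : 1 - α - β ≠ 0) (hinj : Injective fun x => f x - x / (1 - α - β))
    (hz : z ∈ ZeroSet N α β q f) (h j : Fin N) : z h = z j :=
  hinj <| (sub_div_eq_of_mem_ZeroSet hs hz h).trans (sub_div_eq_of_mem_ZeroSet hs hz j).symm

theorem stmt12_general (N : ℕ) (α β q : ℝ)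
    (hαβ : α + β ∈ Set.Ioo (0 : ℝ) 1)
    (θ xs : ℝ) (hθ : 0 < θ)
    (hcase : θ / 4 ≤ 1 / (1 - α - β)) :
    (∀ c ∈ Set.Ioo (-(α + β) / (1 - α - β)) (0 : ℝ),
      ∃! x, x ∈ Set.Icc (0 : ℝ) 1 ∧ fLogP θ xs x - x / (1 - α - β) - c = 0) ∧
    ∀ z ∈ ZeroSet N α β q (fLogP θ xs), ∀ h j, z h = z j := by
  have hs : 0 < 1 - α - β := by linarith [hαβ.2]
  have hanti := fLogP_sub_div_strictAnti (xs := xs) hθ hcase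
  refine ⟨fun c ⟨hc₁, hc₀⟩ => ?_, fun z hz => apply_eq_of_mem_ZeroSet hs.ne' hanti.injective hz⟩
  simp only [sub_eq_zero]
  refine hanti.existsUnique_mem_Icc_eq (fLogP_sub_div_continuous θ xs _) zero_le_one ⟨?_, ?_⟩
  · have hg₁ : 1 - 1 / (1 - α - β) = -(α + β) / (1 - α - β) := by
      field_simp
      ring
    linarith [fLogP_lt_one θ xs 1]
  · simp only [zero_div, sub_zero]
    linarith [fLogP_pos θ xs 0]

/-- deterministic core of Theorem 3.3 under condition S1, for `f = f_LogP`: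
if `θ/4 ≤ 1/(1−α−β)`, then for every `c ∈ (−(α+β)/(1−α−β), 0)` the function
`φ̃_c(x) = f(x) − x/(1−α−β) − c` has exactly one zero in `[0,1]`; consequently every point
of `Z(F)` is a synchronization point. -/
theorem stmt12 (N : ℕ) (hN : 1 ≤ N) (α β q : ℝ)
    (hα : α ∈ Set.Ico (0 : ℝ) 1) (hβ : β ∈ Set.Ico (0 : ℝ) 1)
    (hαβ : α + β ∈ Set.Ioo (0 : ℝ) 1) (hq : q ∈ Set.Ioc (0 : ℝ) 1)
    (θ xs : ℝ) (hθ : 0 < θ) (hxs : xs ∈ Set.Ioo (0 : ℝ) 1)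
    (hcase : θ / 4 ≤ 1 / (1 - α - β)) :
    (∀ c ∈ Set.Ioo (-(α + β) / (1 - α - β)) (0 : ℝ),
      ∃! x, x ∈ Set.Icc (0 : ℝ) 1 ∧ fLogP θ xs x - x / (1 - α - β) - c = 0) ∧
    ∀ z ∈ ZeroSet N α β q (fLogP θ xs), ∀ h j, z h = z j :=
  stmt12_general N α β q hαβ θ xs hθ hcase

end
end
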